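/- (Identity (F13) in the proof of Theorem 2) The vectors x and y satisfy λ³y = λ²(ΔB₁)x − λ(ΔB₂)x + (D_Δ)x − y. -/
import Mathlib


open Matrix ENNReal

namespace PercNB

variable {V : Type*} [Fintype V] [DecidableEq V]

/-- `p : Fin (g+1) → V` is a length-`g` directed path in the simple graph `G`:
`g+1` pairwise distinct vertices with consecutive vertices adjacent. -/
def IsDiPath (G : SimpleGraph V) (g : ℕ) (p : Fin (g+1) → V) : Prop :=
  Function.Injective p ∧ ∀ k : Fin g, G.Adj (p k.castSucc) (p k.succ)

instance (G : SimpleGraph V) [DecidableRel G.Adj] (g : ℕ) :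
    DecidablePred (IsDiPath G g) := fun p =>
  inferInstanceAs (Decidable (Function.Injective p ∧ ∀ k : Fin g, G.Adj (p k.castSucc) (p k.succ)))

/-- The type of length-`g` directed paths of `G`. -/
abbrev DiPath (G : SimpleGraph V) (g : ℕ) := {p : Fin (g+1) → V // IsDiPath G g p}

/-- The `g`-th-order non-backtracking matrix `B^(g)` of `G`, indexed by the length-`g`
directed paths of `G`: the `(p, q)` entry is `1` if `q k = p (k+1)` for `1 ≤ k ≤ g` and
`(p 1, …, p (g+1), q (g+1))` is a length-`(g+1)` directed path, and `0` otherwise. -/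
def NBM (G : SimpleGraph V) [DecidableRel G.Adj] (g : ℕ) :
    Matrix (DiPath G g) (DiPath G g) ℂ := fun p q =>
  if (∀ k : Fin g, q.1 k.castSucc = p.1 k.succ) ∧
      IsDiPath G (g+1) (Fin.snoc p.1 (q.1 (Fin.last g))) then 1 else 0

/-- The spectral radius of a finite square complex matrix:
the maximum modulus of its eigenvalues (`0` if the index type is empty). -/
noncomputable def specRad {n : Type*} [Fintype n] [DecidableEq n] (X : Matrix n n ℂ) : ℝ≥0∞ :=
  spectralRadius ℂ X

/-- `c : Fin k → V` is a simple cycle of length `k ≥ 3` in `G`: pairwise distinct vertices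
with `c t` adjacent to `c (t+1)` for `1 ≤ t ≤ k-1` and `c k` adjacent to `c 1`. -/
def IsSimpleCycle (G : SimpleGraph V) (k : ℕ) (c : Fin k → V) : Prop :=
  3 ≤ k ∧ Function.Injective c ∧
    ∀ t : Fin k, G.Adj (c t) (c ⟨(t.val + 1) % k, Nat.mod_lt _ t.pos⟩)

/-- The arc relation of the digraph `G^(g)` on the length-`g` directed paths of `G`:
`p → q` exactly when `B^(g)_{p,q} = 1`. -/
def NBArc (G : SimpleGraph V) (g : ℕ) (p q : DiPath G g) : Prop :=
  (∀ k : Fin g, q.1 k.castSucc = p.1 k.succ) ∧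
    IsDiPath G (g+1) (Fin.snoc p.1 (q.1 (Fin.last g)))

/-- The arc relation of the line digraph `L(G^(g-1))` (for `g ≥ 1`), under the identification
of its vertices — the arcs `(i₁,…,i_g) → (i₂,…,i_{g+1})` of `G^(g-1)` — with the length-`g`
directed paths `(i₁,…,i_{g+1})` of `G`: there is an arc `p → q` exactly when the arc
corresponding to `p` ends at the tail of the arc corresponding to `q`, i.e. when
`q k = p (k+1)` for `1 ≤ k ≤ g`. -/
def LineArc (G : SimpleGraph V) (g : ℕ) (p q : DiPath G g) : Prop :=
  ∀ k : Fin g, q.1 k.castSucc = p.1 k.succ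

/-- `c : Fin k → α` is a directed cycle of length `k` with respect to the arc relation `r`:
`k` pairwise distinct vertices with an arc from each to the cyclically next one. -/
def IsDiCycle {α : Type*} (r : α → α → Prop) (k : ℕ) (c : Fin k → α) : Prop :=
  Function.Injective c ∧ ∀ t : Fin k, r (c t) (c ⟨(t.val + 1) % k, Nat.mod_lt _ t.pos⟩)

/-- The type of directed edges of `G`: ordered pairs of adjacent vertices. -/
abbrev DiEdge (G : SimpleGraph V) := {e : V × V // G.Adj e.1 e.2}

/-- The standard non-backtracking matrix `B = B^(1)`, indexed by directed edges:
`B_{(i,j),(k,l)} = 1` iff `j = k`, `l ≠ i` and `j` is adjacent to `l`. -/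
def Bmat (G : SimpleGraph V) [DecidableRel G.Adj] : Matrix (DiEdge G) (DiEdge G) ℂ :=
  fun e f => if e.1.2 = f.1.1 ∧ f.1.2 ≠ e.1.1 ∧ G.Adj e.1.2 f.1.2 then 1 else 0

/-- `(ΔB₁)_{(i,j),(k,l)} = 1` iff `B_{(i,j),(k,l)} = 1` and `i` is adjacent to `l`. -/
def dB1 (G : SimpleGraph V) [DecidableRel G.Adj] : Matrix (DiEdge G) (DiEdge G) ℂ :=
  fun e f => if (e.1.2 = f.1.1 ∧ f.1.2 ≠ e.1.1 ∧ G.Adj e.1.2 f.1.2) ∧ G.Adj e.1.1 f.1.2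
    then 1 else 0

/-- `(ΔB₂)_{(i,j),(k,l)} = 1` iff `l = i` and `j` is adjacent to `k`. -/
def dB2 (G : SimpleGraph V) [DecidableRel G.Adj] : Matrix (DiEdge G) (DiEdge G) ℂ :=
  fun e f => if f.1.2 = e.1.1 ∧ G.Adj e.1.2 f.1.1 then 1 else 0

/-- The diagonal matrix `D_Δ` whose `((i,j),(i,j))` entry is the number of common
neighbours of `i` and `j`. -/
noncomputable def Ddel (G : SimpleGraph V) [DecidableRel G.Adj] :
    Matrix (DiEdge G) (DiEdge G) ℂ :=
  Matrix.diagonal fun e =>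
    ((Finset.univ.filter fun v => G.Adj e.1.1 v ∧ G.Adj e.1.2 v).card : ℂ)

/-- The `8E × 8E` block matrix
`M = [[B, −ΔB₂, D_Δ − I, B − ΔB₁], [I, 0, 0, 0], [0, I, 0, 0], [0, 0, I, 0]]`. -/
noncomputable def Mmat (G : SimpleGraph V) [DecidableRel G.Adj] :
    Matrix ((DiEdge G ⊕ DiEdge G) ⊕ (DiEdge G ⊕ DiEdge G))
      ((DiEdge G ⊕ DiEdge G) ⊕ (DiEdge G ⊕ DiEdge G)) ℂ :=
  Matrix.fromBlocks
    (Matrix.fromBlocks (Bmat G) (-(dB2 G)) 1 0)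
    (Matrix.fromBlocks (Ddel G - 1) (Bmat G - dB1 G) 0 0)
    (Matrix.fromBlocks 0 1 0 0)
    (Matrix.fromBlocks 0 0 1 0)

/-- `x_{(i,j)} = Σ_k ψ_{(i,j,k)}`, the sum over all vertices `k` adjacent to `j` with
`k ≠ i`; equivalently, the sum of `ψ` over all length-2 directed paths starting `(i,j,·)`. -/
noncomputable def xvec (G : SimpleGraph V) [DecidableRel G.Adj] (ψ : DiPath G 2 → ℂ) :
    DiEdge G → ℂ := fun e =>
  ∑ p ∈ Finset.univ.filter (fun p : DiPath G 2 => p.1 0 = e.1.1 ∧ p.1 1 = e.1.2), ψ p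

/-- `y_{(i,j)} = Σ_k ψ_{(i,j,k)}`, the sum over all vertices `k` adjacent to both `i`
and `j`. -/
noncomputable def yvec (G : SimpleGraph V) [DecidableRel G.Adj] (ψ : DiPath G 2 → ℂ) :
    DiEdge G → ℂ := fun e =>
  ∑ p ∈ Finset.univ.filter
    (fun p : DiPath G 2 => p.1 0 = e.1.1 ∧ p.1 1 = e.1.2 ∧ G.Adj e.1.1 (p.1 2)), ψ p

/-- The block vector `z = (x, λ⁻¹x, λ⁻²x, λ⁻³x)`. -/
noncomputable def blockVec {G : SimpleGraph V} (lam : ℂ) (x : DiEdge G → ℂ) :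
    (DiEdge G ⊕ DiEdge G) ⊕ (DiEdge G ⊕ DiEdge G) → ℂ :=
  Sum.elim (Sum.elim x (lam⁻¹ • x)) (Sum.elim ((lam ^ 2)⁻¹ • x) ((lam ^ 3)⁻¹ • x))

/-- The vector `ψ` built from `x`:
`ψ_{(i,j,k)} = (λ²x_{(j,k)} − λx_{(k,i)} + x_{(i,j)})/(λ³+1)` if `i` and `k` are adjacent,
and `ψ_{(i,j,k)} = λ⁻¹ x_{(j,k)}` if `i` and `k` are not adjacent. -/
noncomputable def psiOf (G : SimpleGraph V) [DecidableRel G.Adj] (lam : ℂ)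
    (x : DiEdge G → ℂ) : DiPath G 2 → ℂ := fun p =>
  if h : G.Adj (p.1 0) (p.1 2) then
    (lam ^ 2 * x ⟨(p.1 1, p.1 2), by simpa using p.2.2 1⟩
      - lam * x ⟨(p.1 2, p.1 0), h.symm⟩
      + x ⟨(p.1 0, p.1 1), by simpa using p.2.2 0⟩) / (lam ^ 3 + 1)
  else lam⁻¹ * x ⟨(p.1 1, p.1 2), by simpa using p.2.2 1⟩

variable {G : SimpleGraph V} [DecidableRel G.Adj]

def mk2 (a b c : V) (hab : G.Adj a b) (hbc : G.Adj b c) (hac : a ≠ c) : DiPath G 2 :=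
  ⟨![a, b, c], by
    constructor
    · intro s t hst
      fin_cases s <;> fin_cases t <;>
        simp_all [hab.ne, hbc.ne, hac, hab.ne', hbc.ne']
    · intro k; fin_cases k <;> simpa⟩

lemma snoc_eq (p : Fin 3 → V) (x : V) : Fin.snoc p x = ![p 0, p 1, p 2, x] := by
  funext k; fin_cases k <;> rfl

lemma inj4 {a b c d : V} (h1 : a≠b) (h2 : a≠c) (h3 : a≠d) (h4 : b≠c) (h5 : b≠d)
    (h6 : c≠d) : Function.Injective ![a,b,c,d] := by
  intro s t hst; fin_cases s <;> fin_cases t <;> simp_all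

lemma NBM2_cond (p q : DiPath G 2) :
    NBM G 2 p q = if q.1 0 = p.1 1 ∧ q.1 1 = p.1 2 ∧ q.1 2 ≠ p.1 0 then 1 else 0 := by
  unfold NBM
  congr 1
  simp only [eq_iff_iff]
  have key : q.1 (Fin.last 2) = q.1 2 := rfl
  constructor
  · rintro ⟨h1, h2, h3⟩
    refine ⟨h1 0, h1 1, fun hc => ?_⟩
    rw [snoc_eq] at h2
    have := h2.ne (a₁ := 0) (a₂ := 3) (by decide)
    simp [key, hc] at this
  · rintro ⟨h1, h2, h3⟩
    have hp := p.2.1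
    have hq := q.2.1
    have hpa := p.2.2
    have hqa := q.2.2
    refine ⟨?_, ?_, ?_⟩
    · intro k; fin_cases k <;> assumption
    · rw [snoc_eq, key]
      exact inj4 (hp.ne (by decide)) (hp.ne (by decide)) (Ne.symm h3)
        (hp.ne (by decide)) (h1 ▸ (hq.ne (by decide : (0:Fin 3) ≠ 2)).symm).symm
        (h2 ▸ (hq.ne (by decide : (1:Fin 3) ≠ 2)).symm).symm
    · rw [snoc_eq, key]
      intro k; fin_cases k
      · simpa using hpa 0
      · simpa using hpa 1
      · simpa [← h2] using hqa 1

lemma path_eq (p : DiPath G 2) (a b c : V) (h0 : p.1 0 = a) (h1 : p.1 1 = b)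
    (h2 : p.1 2 = c) (hab : G.Adj a b) (hbc : G.Adj b c) (hac : a ≠ c) :
    p = mk2 a b c hab hbc hac := by
  apply Subtype.ext
  funext k
  fin_cases k <;> simpa [mk2]

lemma eig_step (lam : ℂ) (ψ : DiPath G 2 → ℂ) (hψ : (NBM G 2) *ᵥ ψ = lam • ψ)
    (a b c : V) (hab : G.Adj a b) (hbc : G.Adj b c) (hac : a ≠ c) :
    lam * ψ (mk2 a b c hab hbc hac) = xvec G ψ ⟨(b, c), hbc⟩
      - (if h : G.Adj a c then ψ (mk2 b c a hbc h.symm hab.ne') else 0) := by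
  have hm : (NBM G 2 *ᵥ ψ) (mk2 a b c hab hbc hac) = lam * ψ (mk2 a b c hab hbc hac) := by
    rw [hψ]; rfl
  rw [mulVec] at hm
  simp only [dotProduct, NBM2_cond, ite_mul, one_mul, zero_mul] at hm
  rw [← Finset.sum_filter] at hm
  rw [← hm]
  simp only [show (mk2 a b c hab hbc hac).1 0 = a from rfl,
    show (mk2 a b c hab hbc hac).1 1 = b from rfl,
    show (mk2 a b c hab hbc hac).1 2 = c from rfl]
  rw [show xvec G ψ ⟨(b,c),hbc⟩
    = ∑ q ∈ Finset.univ.filter (fun q : DiPath G 2 => q.1 0 = b ∧ q.1 1 = c), ψ q from rfl]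
  rw [← Finset.sum_filter_add_sum_filter_not
    (Finset.univ.filter (fun q : DiPath G 2 => q.1 0 = b ∧ q.1 1 = c))
    (fun q => q.1 2 ≠ a) ψ]
  simp only [Finset.filter_filter, not_not, and_assoc]
  have hC : ∑ q ∈ Finset.univ.filter
      (fun q : DiPath G 2 => q.1 0 = b ∧ q.1 1 = c ∧ q.1 2 = a), ψ q
      = (if h : G.Adj a c then ψ (mk2 b c a hbc h.symm hab.ne') else 0) := by
    by_cases h : G.Adj a c
    · rw [dif_pos h]
      have hset : Finset.univ.filter
          (fun q : DiPath G 2 => q.1 0 = b ∧ q.1 1 = c ∧ q.1 2 = a)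
          = {mk2 b c a hbc h.symm hab.ne'} := by
        ext q
        simp only [Finset.mem_filter, Finset.mem_univ, true_and, Finset.mem_singleton]
        constructor
        · rintro ⟨h0, h1, h2⟩
          exact path_eq q b c a h0 h1 h2 hbc h.symm hab.ne'
        · rintro rfl; exact ⟨rfl, rfl, rfl⟩
      rw [hset, Finset.sum_singleton]
    · rw [dif_neg h]
      have hemp : Finset.univ.filter
          (fun q : DiPath G 2 => q.1 0 = b ∧ q.1 1 = c ∧ q.1 2 = a) = ∅ := by
        refine Finset.eq_empty_of_forall_notMem fun q hq => ?_
        simp only [Finset.mem_filter, Finset.mem_univ, true_and] at hq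
        obtain ⟨h0, h1, h2⟩ := hq
        have := q.2.2 1
        rw [show (Fin.castSucc 1 : Fin 3) = 1 from rfl, show (Fin.succ 1 : Fin 3) = 2 from rfl,
          h1, h2] at this
        exact h this.symm
      rw [hemp, Finset.sum_empty]
  rw [hC]
  ring
lemma tri (lam : ℂ) (ψ : DiPath G 2 → ℂ) (hψ : (NBM G 2) *ᵥ ψ = lam • ψ)
    (a b c : V) (hab : G.Adj a b) (hbc : G.Adj b c) (hca : G.Adj c a) :
    lam ^ 3 * ψ (mk2 a b c hab hbc hca.ne') =
      lam ^ 2 * xvec G ψ ⟨(b, c), hbc⟩ - lam * xvec G ψ ⟨(c, a), hca⟩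
        + xvec G ψ ⟨(a, b), hab⟩ - ψ (mk2 a b c hab hbc hca.ne') := by
  have e1 : lam * ψ (mk2 a b c hab hbc hca.ne') = xvec G ψ ⟨(b, c), hbc⟩
      - ψ (mk2 b c a hbc hca hab.ne') := by
    have h := eig_step lam ψ hψ a b c hab hbc hca.ne'
    rw [dif_pos hca.symm] at h
    exact h
  have e2 : lam * ψ (mk2 b c a hbc hca hab.ne') = xvec G ψ ⟨(c, a), hca⟩
      - ψ (mk2 c a b hca hab hbc.ne') := by
    have h := eig_step lam ψ hψ b c a hbc hca hab.ne'
    rw [dif_pos hab.symm] at h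
    exact h
  have e3 : lam * ψ (mk2 c a b hca hab hbc.ne') = xvec G ψ ⟨(a, b), hab⟩
      - ψ (mk2 a b c hab hbc hca.ne') := by
    have h := eig_step lam ψ hψ c a b hca hab hbc.ne'
    rw [dif_pos hbc.symm] at h
    exact h
  linear_combination lam ^ 2 * e1 - lam * e2 + e3

/-- **Identity (F13).** The vectors `x` and `y` satisfy
`λ³y = λ²(ΔB₁)x − λ(ΔB₂)x + (D_Δ)x − y`. -/
theorem identity_F13 (G : SimpleGraph V) [DecidableRel G.Adj]
    (lam : ℂ) (h0 : lam ≠ 0) (ψ : DiPath G 2 → ℂ) (hψ : (NBM G 2) *ᵥ ψ = lam • ψ) :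
    lam ^ 3 • yvec G ψ =
      lam ^ 2 • ((dB1 G) *ᵥ xvec G ψ) - lam • ((dB2 G) *ᵥ xvec G ψ)
        + (Ddel G) *ᵥ xvec G ψ - yvec G ψ := by
  funext e
  obtain ⟨⟨i, j⟩, hij⟩ := e
  simp only [Pi.smul_apply, Pi.sub_apply, Pi.add_apply, smul_eq_mul]
  set x := xvec G ψ with hx
  set N := Finset.univ.filter (fun v => G.Adj i v ∧ G.Adj j v) with hNdef
  -- y as a sum over common neighbours
  have hy : yvec G ψ ⟨(i, j), hij⟩ = ∑ v ∈ N, (if h : G.Adj i v ∧ G.Adj j v then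
      ψ (mk2 i j v hij h.2 h.1.ne) else 0) := by
    rw [show yvec G ψ ⟨(i, j), hij⟩ = ∑ p ∈ Finset.univ.filter
      (fun p : DiPath G 2 => p.1 0 = i ∧ p.1 1 = j ∧ G.Adj i (p.1 2)), ψ p from rfl]
    refine Finset.sum_bij' (fun p _ => p.1 2)
      (fun v hv => mk2 i j v hij (by simp [hNdef] at hv; exact hv.2)
        (by simp [hNdef] at hv; exact hv.1.ne)) ?_ ?_ ?_ ?_ ?_
    · intro p hp
      simp only [Finset.mem_filter, Finset.mem_univ, true_and] at hp
      simp only [hNdef, Finset.mem_filter, Finset.mem_univ, true_and]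
      refine ⟨hp.2.2, ?_⟩
      have := p.2.2 1
      rw [show (Fin.castSucc 1 : Fin 3) = 1 from rfl, show (Fin.succ 1 : Fin 3) = 2 from rfl,
        hp.2.1] at this
      exact this
    · intro v hv
      simp only [Finset.mem_filter, Finset.mem_univ, true_and]
      simp only [hNdef, Finset.mem_filter, Finset.mem_univ, true_and] at hv
      exact ⟨rfl, rfl, hv.1⟩
    · intro p hp
      simp only [Finset.mem_filter, Finset.mem_univ, true_and] at hp
      exact (path_eq p i j (p.1 2) hp.1 hp.2.1 rfl hij _ _).symm
    · intro v hv; rfl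
    · intro p hp
      simp only [Finset.mem_filter, Finset.mem_univ, true_and] at hp
      have hv2 : G.Adj i (p.1 2) ∧ G.Adj j (p.1 2) := by
        refine ⟨hp.2.2, ?_⟩
        have := p.2.2 1
        rw [show (Fin.castSucc 1 : Fin 3) = 1 from rfl, show (Fin.succ 1 : Fin 3) = 2 from rfl,
          hp.2.1] at this
        exact this
      rw [dif_pos hv2]
      exact congrArg ψ (path_eq p i j (p.1 2) hp.1 hp.2.1 rfl hij _ _)
  -- dB1 mulVec as a sum over common neighbours
  have h1 : (dB1 G *ᵥ x) ⟨(i, j), hij⟩ = ∑ v ∈ N, (if h : G.Adj j v then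
      x ⟨(j, v), h⟩ else 0) := by
    rw [mulVec]
    simp only [dB1, dotProduct, ite_mul, one_mul, zero_mul]
    rw [← Finset.sum_filter]
    refine Finset.sum_bij' (fun f _ => f.1.2) (fun v hv => ⟨(j, v), by
      simp only [hNdef, Finset.mem_filter, Finset.mem_univ, true_and] at hv
      exact hv.2⟩) ?_ ?_ ?_ ?_ ?_
    · intro f hf
      simp only [Finset.mem_filter, Finset.mem_univ, true_and] at hf
      simp only [hNdef, Finset.mem_filter, Finset.mem_univ, true_and]
      exact ⟨hf.2, hf.1.2.2⟩
    · intro v hv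
      simp only [hNdef, Finset.mem_filter, Finset.mem_univ, true_and] at hv
      exact Finset.mem_filter.mpr ⟨Finset.mem_univ _, ⟨rfl, hv.1.ne', hv.2⟩, hv.1⟩
    · intro f hf
      simp only [Finset.mem_filter, Finset.mem_univ, true_and] at hf
      exact Subtype.ext (Prod.ext hf.1.1 rfl)
    · intro v hv; rfl
    · intro f hf
      simp only [Finset.mem_filter, Finset.mem_univ, true_and] at hf
      rw [dif_pos hf.1.2.2]
      exact congrArg x (Subtype.ext (Prod.ext hf.1.1.symm rfl))
  have h2 : (dB2 G *ᵥ x) ⟨(i, j), hij⟩ = ∑ v ∈ N, (if h : G.Adj i v then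
      x ⟨(v, i), h.symm⟩ else 0) := by
    rw [mulVec]
    simp only [dB2, dotProduct, ite_mul, one_mul, zero_mul]
    rw [← Finset.sum_filter]
    refine Finset.sum_bij' (fun f _ => f.1.1) (fun v hv => ⟨(v, i), by
      simp only [hNdef, Finset.mem_filter, Finset.mem_univ, true_and] at hv
      exact hv.1.symm⟩) ?_ ?_ ?_ ?_ ?_
    · intro f hf
      simp only [Finset.mem_filter, Finset.mem_univ, true_and] at hf
      simp only [hNdef, Finset.mem_filter, Finset.mem_univ, true_and]
      exact ⟨(hf.1 ▸ f.2).symm, hf.2⟩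
    · intro v hv
      simp only [hNdef, Finset.mem_filter, Finset.mem_univ, true_and] at hv
      exact Finset.mem_filter.mpr ⟨Finset.mem_univ _, rfl, hv.2⟩
    · intro f hf
      simp only [Finset.mem_filter, Finset.mem_univ, true_and] at hf
      exact Subtype.ext (Prod.ext rfl hf.1.symm)
    · intro v hv; rfl
    · intro f hf
      simp only [Finset.mem_filter, Finset.mem_univ, true_and] at hf
      rw [dif_pos (hf.1 ▸ f.2).symm]
      exact congrArg x (Subtype.ext (Prod.ext rfl hf.1))
  -- Ddel mulVec
  have h3 : (Ddel G *ᵥ x) ⟨(i, j), hij⟩ = (N.card : ℂ) * x ⟨(i, j), hij⟩ := by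
    rw [Ddel, mulVec_diagonal, hNdef]
  rw [hy, h1, h2, h3]
  rw [show (N.card : ℂ) * x ⟨(i, j), hij⟩ = ∑ _v ∈ N, x ⟨(i, j), hij⟩ by
    rw [Finset.sum_const, nsmul_eq_mul]]
  rw [Finset.mul_sum, Finset.mul_sum, Finset.mul_sum, ← Finset.sum_sub_distrib,
    ← Finset.sum_add_distrib, ← Finset.sum_sub_distrib]
  refine Finset.sum_congr rfl fun v hv => ?_
  simp only [hNdef, Finset.mem_filter, Finset.mem_univ, true_and] at hv
  rw [dif_pos hv, dif_pos hv.2, dif_pos hv.1]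
  exact tri lam ψ hψ i j v hij hv.2 hv.1.symm

end PercNB
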